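/- Let λ ∈ ℝ be such that λ ≠ k(k+1) for every k ∈ ℕ. Then every twice-differentiable solution a : (−1,1) → ℝ of Legendre's equation (1−τ²)·a″(τ) − 2τ·a′(τ) + λ·a(τ) = 0 that is bounded on (−1,1) is identically zero. In particular, for n > 4 and ℓ > 0 with λ = ℓ(ℓ+n−3) not of the form k(k+1), the only p = 0 mode solution of the conformal wave equation that is regular at both critical sets τ = ±1 is the trivial one, and the corresponding asymptotic charge vanishes. -/

import Mathlib

open Set Filter Topology MeasureTheory Polynomial
open scoped NNReal

/-!
The flux `b = (1 - τ²) a'` satisfies `b' = -λ a`, so it is Lipschitz and has limits at `±1`.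
A nonzero limit would force `a' ~ c / (1 - τ)`, making `a` grow like `log`, against boundedness;
hence `b = O(1 - τ²)`, `a'` is bounded and `a` extends continuously to `[-1, 1]`. Integrating
against `τⁿ` (the boundary terms vanish) gives the moment recurrence
`n (n - 1) m_{n-2} = (n (n + 1) - λ) m_n`, so all moments vanish when `λ ≠ k (k + 1)`;
by Weierstrass, `a` is then orthogonal to itself.
-/

theorem tendsto_one_sub_nhdsLT_one : Tendsto (fun τ : ℝ => 1 - τ) (𝓝[<] 1) (𝓝[>] 0) := by
  rw [tendsto_nhdsWithin_iff]
  refine ⟨?_, eventually_nhdsWithin_of_forall fun τ (hτ : τ < 1) => sub_pos.2 hτ⟩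
  simpa using ((continuous_sub_left (1 : ℝ)).tendsto 1).mono_left nhdsWithin_le_nhds

theorem tendsto_atTop_of_div_one_sub_le_deriv {f f' : ℝ → ℝ} {c t : ℝ} (hc : 0 < c) (ht : t < 1)
    (hf : ∀ τ ∈ Ioo t 1, HasDerivAt f (f' τ) τ) (hf' : ∀ τ ∈ Ioo t 1, c / (1 - τ) ≤ f' τ) :
    Tendsto f (𝓝[<] 1) atTop := by
  set h : ℝ → ℝ := fun τ => f τ + c * Real.log (1 - τ)
  have hh : ∀ τ ∈ Ioo t 1, HasDerivAt h (f' τ + c * (-1 / (1 - τ))) τ := fun τ hτ =>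
    (hf τ hτ).add ((((hasDerivAt_id τ).const_sub 1).log (sub_pos.2 hτ.2).ne').const_mul c)
  have hmono : MonotoneOn h (Ioo t 1) := by
    refine monotoneOn_of_hasDerivWithinAt_nonneg (f' := fun τ => f' τ + c * (-1 / (1 - τ)))
      (convex_Ioo t 1)
      (fun τ hτ => (hh τ hτ).continuousAt.continuousWithinAt) (fun τ hτ => ?_) fun τ hτ => ?_
    · rw [interior_Ioo] at hτ ⊢
      exact (hh τ hτ).hasDerivWithinAt
    · rw [interior_Ioo] at hτ
      have hneg : c * (-1 / (1 - τ)) = -(c / (1 - τ)) := by ring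
      linarith [hf' τ hτ]
  -- `f ≥ h s - c log (1 - τ)` on `[s, 1)`, and the right-hand side tends to `+∞`
  obtain ⟨s, hs⟩ := nonempty_Ioo.2 ht
  have hlog : Tendsto (fun τ => h s + -c * Real.log (1 - τ)) (𝓝[<] 1) atTop :=
    tendsto_atTop_add_const_left _ _
      ((Real.tendsto_log_nhdsGT_zero.comp tendsto_one_sub_nhdsLT_one).const_mul_atBot_of_neg
        (neg_lt_zero.2 hc))
  refine tendsto_atTop_mono' _ ?_ hlog
  filter_upwards [Ico_mem_nhdsLT hs.2] with τ hτ
  have := hmono hs ⟨hs.1.trans_le hτ.1, hτ.2⟩ hτ.1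
  simp only [h] at this
  linarith

theorem nonpos_of_tendsto_one_sub_sq_mul_deriv {f : ℝ → ℝ} {L M : ℝ}
    (hf : ∀ᶠ τ in 𝓝[<] 1, DifferentiableAt ℝ f τ) (hM : ∀ᶠ τ in 𝓝[<] 1, f τ ≤ M)
    (hL : Tendsto (fun τ => (1 - τ ^ 2) * deriv f τ) (𝓝[<] 1) (𝓝 L)) : L ≤ 0 := by
  by_contra! hL0
  have hev : ∀ᶠ τ in 𝓝[<] 1,
      (DifferentiableAt ℝ f τ ∧ L / 2 < (1 - τ ^ 2) * deriv f τ) ∧ τ ∈ Ioo 0 1 :=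
    (hf.and (hL.eventually (lt_mem_nhds (half_lt_self hL0)))).and (Ioo_mem_nhdsLT one_pos)
  obtain ⟨t, ht, hsub⟩ := mem_nhdsLT_iff_exists_Ioo_subset.1 hev
  have htop : Tendsto f (𝓝[<] 1) atTop := by
    refine tendsto_atTop_of_div_one_sub_le_deriv (c := L / 4) (by positivity) ht
      (fun τ hτ => (hsub hτ).1.1.hasDerivAt) fun τ hτ => ?_
    obtain ⟨⟨-, hlt⟩, h0, h1⟩ := hsub hτ
    -- `1 - τ² ≤ 2 (1 - τ)` on `(0, 1)`
    rw [div_le_iff₀ (by linarith)]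
    nlinarith
  obtain ⟨τ, hτM, hτ⟩ := ((htop.eventually_gt_atTop M).and hM).exists
  linarith

theorem eq_zero_of_tendsto_one_sub_sq_mul_deriv {f : ℝ → ℝ} {L M : ℝ}
    (hf : ∀ᶠ τ in 𝓝[<] 1, DifferentiableAt ℝ f τ) (hM : ∀ᶠ τ in 𝓝[<] 1, |f τ| ≤ M)
    (hL : Tendsto (fun τ => (1 - τ ^ 2) * deriv f τ) (𝓝[<] 1) (𝓝 L)) : L = 0 := by
  refine le_antisymm (nonpos_of_tendsto_one_sub_sq_mul_deriv hf
    (hM.mono fun τ h => (le_abs_self _).trans h) hL) (neg_nonpos.1 ?_)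
  refine nonpos_of_tendsto_one_sub_sq_mul_deriv (f := -f) (hf.mono fun τ h => h.neg)
    (hM.mono fun τ h => (neg_le_abs _).trans h) ?_
  simpa only [deriv.neg', mul_neg] using hL.neg

theorem integral_mul_eval_eq_zero_of_integral_mul_pow_eq_zero {g : ℝ → ℝ} {a b : ℝ}
    (hg : ContinuousOn g (uIcc a b)) (h : ∀ n : ℕ, ∫ x in a..b, g x * x ^ n = 0)
    (p : ℝ[X]) : ∫ x in a..b, g x * p.eval x = 0 := by
  induction p using Polynomial.induction_on' with
  | add p q hp hq =>
    have hint : ∀ r : ℝ[X], IntervalIntegrable (fun x => g x * r.eval x) volume a b :=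
      fun r => (hg.mul r.continuous.continuousOn).intervalIntegrable
    simp only [eval_add, mul_add, intervalIntegral.integral_add (hint p) (hint q), hp, hq,
      add_zero]
  | monomial n c =>
    simp only [eval_monomial, mul_left_comm (g _), intervalIntegral.integral_const_mul, h,
      mul_zero]

theorem eqOn_zero_of_integral_mul_pow_eq_zero {g : ℝ → ℝ} {a b : ℝ} (hab : a ≤ b)
    (hg : ContinuousOn g (Icc a b)) (h : ∀ n : ℕ, ∫ x in a..b, g x * x ^ n = 0) :
    EqOn g 0 (Ioo a b) := by
  have hg' : ContinuousOn g (uIcc a b) := by rwa [uIcc_of_le hab]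
  have hgg : IntervalIntegrable (fun x => g x * g x) volume a b :=
    (hg'.mul hg').intervalIntegrable
  obtain ⟨C, hC⟩ := isCompact_Icc.exists_bound_of_continuousOn hg
  have hsmall : ∀ ε > 0, |∫ x in a..b, g x * g x| ≤ C * ε * (b - a) := by
    intro ε hε
    obtain ⟨p, hp⟩ := exists_polynomial_near_of_continuousOn a b g hg ε hε
    have hgp : IntervalIntegrable (fun x => g x * p.eval x) volume a b :=
      (hg'.mul p.continuous.continuousOn).intervalIntegrable
    rw [← sub_zero (∫ x in a..b, g x * g x),
      ← integral_mul_eval_eq_zero_of_integral_mul_pow_eq_zero hg' h p,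
      ← intervalIntegral.integral_sub hgg hgp,
      ← Real.norm_eq_abs, ← abs_of_nonneg (sub_nonneg.2 hab)]
    refine intervalIntegral.norm_integral_le_of_norm_le_const fun x hx => ?_
    have hx : x ∈ Icc a b := uIcc_of_le hab ▸ uIoc_subset_uIcc hx
    rw [← mul_sub, norm_mul, norm_sub_rev]
    exact mul_le_mul (hC x hx) (hp x hx).le (norm_nonneg _) ((norm_nonneg _).trans (hC x hx))
  have hzero : ∫ x in a..b, g x * g x = 0 := by
    have hlim : Tendsto (fun ε => C * ε * (b - a)) (𝓝[>] 0) (𝓝 0) := by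
      have : Continuous fun ε : ℝ => C * ε * (b - a) := by fun_prop
      simpa using (this.tendsto 0).mono_left nhdsWithin_le_nhds
    exact abs_nonpos_iff.1 (ge_of_tendsto hlim (eventually_nhdsWithin_of_forall hsmall))
  have hae : (fun x => g x * g x) =ᵐ[volume.restrict (Ioo a b)] 0 :=
    ae_restrict_of_ae_restrict_of_subset Ioo_subset_Ioc_self
      ((intervalIntegral.integral_eq_zero_iff_of_le_of_nonneg_ae hab
        (Eventually.of_forall fun x => mul_self_nonneg (g x)) hgg).1 hzero)
  intro x hx
  exact mul_self_eq_zero.1 (Measure.eqOn_open_of_ae_eq hae isOpen_Ioo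
    ((hg.mono Ioo_subset_Icc_self).mul (hg.mono Ioo_subset_Icc_self)) continuousOn_const hx)

theorem lipschitzOnWith_of_abs_hasDerivAt_le {f f' : ℝ → ℝ} {s : Set ℝ} {K : ℝ≥0}
    (hs : Convex ℝ s) (hf : ∀ x ∈ s, HasDerivAt f (f' x) x) (hK : ∀ x ∈ s, |f' x| ≤ K) :
    LipschitzOnWith K f s :=
  hs.lipschitzOnWith_of_nnnorm_hasDerivWithin_le (fun x hx => (hf x hx).hasDerivWithinAt)
    fun x hx => NNReal.coe_le_coe.1 (hK x hx)

def IsLegendreSolution (lam : ℝ) (a : ℝ → ℝ) : Prop :=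
  ∀ τ ∈ Ioo (-1 : ℝ) 1, DifferentiableAt ℝ a τ ∧ DifferentiableAt ℝ (deriv a) τ ∧
    (1 - τ ^ 2) * deriv (deriv a) τ - 2 * τ * deriv a τ + lam * a τ = 0

/-- The equation reads `(legendreFlux a)' + lam * a = 0`. -/
noncomputable def legendreFlux (a : ℝ → ℝ) (τ : ℝ) : ℝ := (1 - τ ^ 2) * deriv a τ

theorem legendreFlux_comp_neg (a : ℝ → ℝ) :
    legendreFlux (fun τ => a (-τ)) = fun τ => -legendreFlux a (-τ) := by
  ext τ
  simp only [legendreFlux, deriv_comp_neg, neg_sq]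
  ring

theorem legendreFlux_pow (n : ℕ) :
    legendreFlux (fun τ : ℝ => τ ^ n) = fun τ => (1 - τ ^ 2) * ((n : ℝ) * τ ^ (n - 1)) := by
  ext τ
  simp only [legendreFlux, deriv_pow_field]

theorem hasDerivAt_legendreFlux_pow (n : ℕ) (τ : ℝ) :
    HasDerivAt (legendreFlux (fun τ : ℝ => τ ^ n))
      (n * (n - 1) * τ ^ (n - 2) - n * (n + 1) * τ ^ n) τ := by
  rw [legendreFlux_pow]
  refine (((hasDerivAt_pow 2 τ).const_sub 1).mul ((hasDerivAt_pow (n - 1) τ).const_mul _))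
    |>.congr_deriv ?_
  rcases n with _ | _ | n
  · simp
  · norm_num
  · simp only [Nat.add_sub_cancel, show n + 2 - 2 = n from rfl, Nat.cast_add]
    push_cast
    ring

namespace IsLegendreSolution

variable {lam : ℝ} {a : ℝ → ℝ} {M : ℝ≥0}

theorem hasDerivAt_legendreFlux (ha : IsLegendreSolution lam a) {τ : ℝ}
    (hτ : τ ∈ Ioo (-1 : ℝ) 1) : HasDerivAt (legendreFlux a) (-(lam * a τ)) τ := by
  obtain ⟨-, ha', hode⟩ := ha τ hτ
  refine (((hasDerivAt_pow 2 τ).const_sub 1).mul ha'.hasDerivAt).congr_deriv ?_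
  linear_combination hode

theorem comp_neg (ha : IsLegendreSolution lam a) : IsLegendreSolution lam (fun τ => a (-τ)) := by
  intro τ hτ
  have hτ' : -τ ∈ Ioo (-1 : ℝ) 1 := ⟨neg_lt_neg hτ.2, by linarith [hτ.1]⟩
  obtain ⟨h1, h2, hode⟩ := ha (-τ) hτ'
  have hd : deriv (fun x => a (-x)) = fun x => -deriv a (-x) := funext (deriv_comp_neg a)
  refine ⟨differentiableAt_comp_neg.2 h1, ?_, ?_⟩
  · rw [hd]
    exact (differentiableAt_comp_neg.2 h2).neg
  · rw [hd, deriv.fun_neg, deriv_comp_neg]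
    linear_combination hode

theorem lipschitzOnWith_legendreFlux (ha : IsLegendreSolution lam a)
    (hM : ∀ τ ∈ Ioo (-1 : ℝ) 1, |a τ| ≤ M) :
    LipschitzOnWith (‖lam‖₊ * M) (legendreFlux a) (Ioo (-1) 1) :=
  lipschitzOnWith_of_abs_hasDerivAt_le (convex_Ioo _ _)
    (fun τ hτ => ha.hasDerivAt_legendreFlux hτ) fun τ hτ => by
      rw [abs_neg, abs_mul, NNReal.coe_mul, coe_nnnorm, Real.norm_eq_abs]
      exact mul_le_mul_of_nonneg_left (hM τ hτ) (abs_nonneg lam)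

theorem apply_one_eq_zero_of_eqOn_legendreFlux (ha : IsLegendreSolution lam a)
    (hM : ∀ τ ∈ Ioo (-1 : ℝ) 1, |a τ| ≤ M) {B : ℝ → ℝ} (hB : ContinuousAt B 1)
    (hBa : EqOn (legendreFlux a) B (Ioo (-1) 1)) : B 1 = 0 := by
  have hIoo : Ioo (-1 : ℝ) 1 ∈ 𝓝[<] 1 := Ioo_mem_nhdsLT (by norm_num)
  refine eq_zero_of_tendsto_one_sub_sq_mul_deriv (f := a) (M := M)
    (mem_of_superset hIoo fun τ hτ => (ha τ hτ).1) (mem_of_superset hIoo hM) ?_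
  exact (hB.tendsto.mono_left nhdsWithin_le_nhds).congr' (eventuallyEq_of_mem hIoo hBa.symm)

theorem exists_legendreFlux_extension (ha : IsLegendreSolution lam a)
    (hM : ∀ τ ∈ Ioo (-1 : ℝ) 1, |a τ| ≤ M) :
    ∃ B : ℝ → ℝ, LipschitzWith (‖lam‖₊ * M) B ∧ EqOn (legendreFlux a) B (Ioo (-1) 1) ∧
      B (-1) = 0 ∧ B 1 = 0 := by
  obtain ⟨B, hB, hBa⟩ := (ha.lipschitzOnWith_legendreFlux hM).extend_real
  refine ⟨B, hB, hBa, ?_,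
    ha.apply_one_eq_zero_of_eqOn_legendreFlux hM hB.continuous.continuousAt hBa⟩
  -- at `-1`, use the reflected solution `a (-τ)`, whose flux extends to `-B (-τ)`
  have hM' : ∀ τ ∈ Ioo (-1 : ℝ) 1, |a (-τ)| ≤ M := fun τ hτ =>
    hM (-τ) ⟨neg_lt_neg hτ.2, by linarith [hτ.1]⟩
  have hBa' : EqOn (legendreFlux fun τ => a (-τ)) (fun τ => -B (-τ)) (Ioo (-1) 1) := by
    intro τ hτ
    simp only [legendreFlux_comp_neg, hBa ⟨neg_lt_neg hτ.2, by linarith [hτ.1]⟩]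
  simpa using ha.comp_neg.apply_one_eq_zero_of_eqOn_legendreFlux hM'
    (hB.continuous.comp continuous_neg).neg.continuousAt hBa'

theorem abs_deriv_le (ha : IsLegendreSolution lam a) (hM : ∀ τ ∈ Ioo (-1 : ℝ) 1, |a τ| ≤ M)
    {τ : ℝ} (hτ : τ ∈ Ioo (-1 : ℝ) 1) : |deriv a τ| ≤ |lam| * M := by
  obtain ⟨B, hB, hBa, hB_neg_one, hB_one⟩ := ha.exists_legendreFlux_extension hM
  have hτ₁ : 0 < 1 - τ := sub_pos.2 hτ.2
  have hτ₂ : 0 < 1 + τ := by linarith [hτ.1]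
  -- the flux vanishes at `±1` and is `|lam| M`-Lipschitz, so it is `O(1 - τ²)`
  have hflux : |legendreFlux a τ| ≤ |lam| * M * (1 - τ) ∧
      |legendreFlux a τ| ≤ |lam| * M * (1 + τ) := by
    have h₁ := hB.dist_le_mul τ 1
    have h₂ := hB.dist_le_mul τ (-1)
    simp only [hB_one, hB_neg_one, Real.dist_eq, sub_zero, sub_neg_eq_add, ← hBa hτ,
      NNReal.coe_mul, coe_nnnorm, Real.norm_eq_abs] at h₁ h₂
    rw [abs_sub_comm, abs_of_pos hτ₁] at h₁
    rw [add_comm, abs_of_pos hτ₂] at h₂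
    exact ⟨h₁, h₂⟩
  rw [legendreFlux, abs_mul, abs_of_pos (by nlinarith)] at hflux
  refine le_of_mul_le_mul_left ?_ (by nlinarith : 0 < 1 - τ ^ 2)
  rcases le_total 0 τ with h | h
  · nlinarith [hflux.1]
  · nlinarith [hflux.2]

theorem exists_continuous_extension (ha : IsLegendreSolution lam a)
    (hM : ∀ τ ∈ Ioo (-1 : ℝ) 1, |a τ| ≤ M) :
    ∃ g : ℝ → ℝ, Continuous g ∧ EqOn a g (Ioo (-1) 1) := by
  obtain ⟨g, hg, hag⟩ := (lipschitzOnWith_of_abs_hasDerivAt_le (convex_Ioo _ _)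
    (K := ‖lam‖₊ * M) (fun τ hτ => (ha τ hτ).1.hasDerivAt)
    fun τ hτ => by simpa using ha.abs_deriv_le hM hτ).extend_real
  exact ⟨g, hg.continuous, hag⟩

theorem integral_mul_pow_recurrence (ha : IsLegendreSolution lam a)
    (hM : ∀ τ ∈ Ioo (-1 : ℝ) 1, |a τ| ≤ M) {g : ℝ → ℝ} (hg : Continuous g)
    (hag : EqOn a g (Ioo (-1) 1)) (n : ℕ) :
    n * (n - 1) * (∫ x in (-1 : ℝ)..1, g x * x ^ (n - 2)) +
      (lam - n * (n + 1)) * ∫ x in (-1 : ℝ)..1, g x * x ^ n = 0 := by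
  obtain ⟨B, hB, hBa, hB_neg_one, hB_one⟩ := ha.exists_legendreFlux_extension hM
  -- Green's identity for the pair `a`, `τ ^ n`: the `a' (τ ^ n)'` terms cancel
  set F : ℝ → ℝ := fun τ => g τ * legendreFlux (fun τ => τ ^ n) τ - τ ^ n * B τ
  have hF : ∀ x ∈ Ioo (-1 : ℝ) 1, HasDerivAt F
      (n * (n - 1) * (g x * x ^ (n - 2)) + (lam - n * (n + 1)) * (g x * x ^ n)) x := by
    intro x hx
    have hev : (fun τ => a τ * legendreFlux (fun τ => τ ^ n) τ - τ ^ n * legendreFlux a τ)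
        =ᶠ[𝓝 x] F :=
      eventuallyEq_of_mem (isOpen_Ioo.mem_nhds hx) fun τ hτ => by simp only [F, hag hτ, hBa hτ]
    refine ((((ha x hx).1.hasDerivAt.mul (hasDerivAt_legendreFlux_pow n x)).sub
      ((hasDerivAt_pow n x).mul (ha.hasDerivAt_legendreFlux hx))).congr_of_eventuallyEq
        hev.symm).congr_deriv ?_
    simp only [legendreFlux, deriv_pow_field, ← hag hx]
    ring
  have hFc : Continuous F := by
    have := hB.continuous
    simp only [F, legendreFlux_pow]
    fun_prop
  have hFTC := intervalIntegral.integral_eq_sub_of_hasDerivAt_of_le (by norm_num)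
    hFc.continuousOn hF (by apply Continuous.intervalIntegrable; fun_prop)
  have hF₁ : F 1 = 0 := by simp [F, legendreFlux_pow, hB_one]
  have hF₂ : F (-1) = 0 := by simp [F, legendreFlux_pow, hB_neg_one]
  rw [hF₁, hF₂, sub_zero, intervalIntegral.integral_add, intervalIntegral.integral_const_mul,
    intervalIntegral.integral_const_mul] at hFTC
  · exact hFTC
  all_goals apply Continuous.intervalIntegrable; fun_prop

theorem integral_mul_pow_eq_zero (ha : IsLegendreSolution lam a)
    (hM : ∀ τ ∈ Ioo (-1 : ℝ) 1, |a τ| ≤ M) (hlam : ∀ k : ℕ, lam ≠ k * (k + 1)) {g : ℝ → ℝ}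
    (hg : Continuous g) (hag : EqOn a g (Ioo (-1) 1)) (n : ℕ) :
    ∫ x in (-1 : ℝ)..1, g x * x ^ n = 0 := by
  induction n using Nat.strong_induction_on with
  | _ n ih =>
    have hrec := ha.integral_mul_pow_recurrence hM hg hag n
    -- for `n < 2` the truncated `n - 2` is harmless: its coefficient `n (n - 1)` vanishes
    have hprev : (n : ℝ) * (n - 1) * (∫ x in (-1 : ℝ)..1, g x * x ^ (n - 2)) = 0 := by
      rcases n with _ | _ | n
      · simp
      · simp
      · rw [show n + 1 + 1 - 2 = n from rfl, ih n (by omega), mul_zero]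
    rw [hprev, zero_add] at hrec
    exact (mul_eq_zero.1 hrec).resolve_left (sub_ne_zero.2 (hlam n))

end IsLegendreSolution

theorem stmt_13 (lam : ℝ) (hlam : ∀ k : ℕ, lam ≠ (k : ℝ) * ((k : ℝ) + 1)) (a : ℝ → ℝ)
    (hdiff : ∀ τ ∈ Set.Ioo (-1 : ℝ) 1,
      DifferentiableAt ℝ a τ ∧ DifferentiableAt ℝ (deriv a) τ)
    (hode : ∀ τ ∈ Set.Ioo (-1 : ℝ) 1,
      (1 - τ ^ 2) * deriv (deriv a) τ - 2 * τ * deriv a τ + lam * a τ = 0)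
    (hbdd : ∃ M : ℝ, ∀ τ ∈ Set.Ioo (-1 : ℝ) 1, |a τ| ≤ M) :
    ∀ τ ∈ Set.Ioo (-1 : ℝ) 1, a τ = 0 := by
  obtain ⟨M, hM⟩ := hbdd
  have ha : IsLegendreSolution lam a := fun τ hτ => ⟨(hdiff τ hτ).1, (hdiff τ hτ).2, hode τ hτ⟩
  have hM' : ∀ τ ∈ Ioo (-1 : ℝ) 1, |a τ| ≤ M.toNNReal := fun τ hτ =>
    (hM τ hτ).trans (Real.le_coe_toNNReal M)
  obtain ⟨g, hg, hag⟩ := ha.exists_continuous_extension hM'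
  have hg0 := eqOn_zero_of_integral_mul_pow_eq_zero (by norm_num) hg.continuousOn
    (ha.integral_mul_pow_eq_zero hM' hlam hg hag)
  intro τ hτ
  rw [hag hτ]
  exact hg0 hτ
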